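/- Let F, G : [a,b] × [c,d] → ℝ with ‖F‖_{1;p} < ∞ and suppose |Δ_iΔ_j G(x_i,y_j)| ≤ λ(x_i − x_{i-1}) μ(y_j − y_{j-1}) for monotone increasing λ, μ. Let {t_i^{(k)}} be a nested dyadic-refining sequence of partitions of [a,b] with |t_i^{(k)} − t_{i-1}^{(k)}| < 4·2^{-k}, and set S_{M,0} = Σ_{i=1}^{2^M} F(t_i^{(M)}, d) (G(t_i^{(M)}, d) − G(t_{i-1}^{(M)}, d) − G(t_i^{(M)}, c) + G(t_{i-1}^{(M)}, c)) and S_{0,0} = F(b,d)(G(b,d) − G(a,d) − G(b,c) + G(a,c)). Then there is an absolute constant K_1 such that |S_{M,0} − S_{0,0}| ≤ K_1 μ(d − c) Σ_{m=1}^∞ (‖F‖_{1;p}/m^{1/p}) λ(4/m). -/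

import Mathlib

open Set

noncomputable section

/-- Rectangular increment of a two-variable function. -/
def rect (H : ℝ → ℝ → ℝ) (x x' y y' : ℝ) : ℝ :=
  H x' y' - H x y' - H x' y + H x y

/-- `t` is a (monotone) partition of `[a,b]`. -/
def IsPartition {n : ℕ} (a b : ℝ) (t : Fin (n + 1) → ℝ) : Prop :=
  Monotone t ∧ t 0 = a ∧ t (Fin.last n) = b

/-- The set of `p`-variation sums of `f` over partitions of `[a,b]`. -/
def pVarSet (p a b : ℝ) (f : ℝ → ℝ) : Set ℝ :=
  {v | ∃ (n : ℕ) (t : Fin (n + 1) → ℝ), IsPartition a b t ∧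
        v = ∑ i : Fin n, |f (t i.succ) - f (t i.castSucc)| ^ p}

/-- The `p`-variation seminorm `‖f‖_{[a,b],p}`. -/
def pVarNorm (p a b : ℝ) (f : ℝ → ℝ) : ℝ :=
  sSup (pVarSet p a b f) ^ (1 / p)

def biVar1Set (p a b c d : ℝ) (F : ℝ → ℝ → ℝ) : Set ℝ :=
  {v | ∃ y₁ ∈ Icc c d, ∃ y₂ ∈ Icc c d, v = pVarNorm p a b (fun x => F x y₁ - F x y₂)}

/-- The first bivariation seminorm `‖F‖_{1;p}`. -/
def biVar1 (p a b c d : ℝ) (F : ℝ → ℝ → ℝ) : ℝ := sSup (biVar1Set p a b c d F)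

def biVar2Set (q a b c d : ℝ) (F : ℝ → ℝ → ℝ) : Set ℝ :=
  {v | ∃ x₁ ∈ Icc a b, ∃ x₂ ∈ Icc a b, v = pVarNorm q c d (fun y => F x₁ y - F x₂ y)}

/-- The second bivariation seminorm `‖F‖_{2;q}`. -/
def biVar2 (q a b c d : ℝ) (F : ℝ → ℝ → ℝ) : ℝ := sSup (biVar2Set q a b c d F)

/-- `‖F‖_{1;p} < ∞`: all the suprema involved are finite. -/
def FiniteBiVar1 (p a b c d : ℝ) (F : ℝ → ℝ → ℝ) : Prop :=
  (∀ y₁ ∈ Icc c d, ∀ y₂ ∈ Icc c d,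
      BddAbove (pVarSet p a b (fun x => F x y₁ - F x y₂))) ∧
  BddAbove (biVar1Set p a b c d F)

/-- `‖F‖_{2;q} < ∞`: all the suprema involved are finite. -/
def FiniteBiVar2 (q a b c d : ℝ) (F : ℝ → ℝ → ℝ) : Prop :=
  (∀ x₁ ∈ Icc a b, ∀ x₂ ∈ Icc a b,
      BddAbove (pVarSet q c d (fun y => F x₁ y - F x₂ y))) ∧
  BddAbove (biVar2Set q a b c d F)

/-!
Passing from the level-`k` to the level-`(k+1)` dyadic partition `s` changes the
Riemann–Stieltjes sum of `φ = F(·,d) - F(·,c)` against `g = G(·,d) - G(·,c)` by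
`∑ᵢ (φ(s_{2i+1}) - φ(s_{2i+2})) (g(s_{2i+1}) - g(s_{2i}))`. Each increment of `g` is at most
`λ(4/2^{k+1}) μ(d-c)`, and by Hölder the `2^k` increments of `φ` have total size at most
`2^{k(1-1/p)} ‖F‖_{1;p}`. Bounding this level by twice the block `2^k < m ≤ 2^{k+1}` of the
series (Cauchy condensation) and summing over `k` gives `K₁ = 2`.
-/

theorem Finset.sum_range_two_mul {M : Type*} [AddCommMonoid M] (f : ℕ → M) (n : ℕ) :
    ∑ j ∈ Finset.range (2 * n), f j = ∑ i ∈ Finset.range n, (f (2 * i) + f (2 * i + 1)) := by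
  induction n with
  | zero => simp
  | succ n ih => simp [Nat.mul_succ, Finset.sum_range_succ, ih, add_assoc]

section PVariation

variable {p a b : ℝ} {f : ℝ → ℝ}

theorem pVarNorm_nonneg : 0 ≤ pVarNorm p a b f := by
  refine Real.rpow_nonneg (Real.sSup_nonneg ?_) _
  rintro v ⟨n, t, -, rfl⟩
  exact Finset.sum_nonneg fun i _ => Real.rpow_nonneg (abs_nonneg _) _

theorem sum_range_mem_pVarSet {s : ℕ → ℝ} {N : ℕ}
    (hs : ∀ i j, i ≤ j → j ≤ N → s i ≤ s j) (hs0 : s 0 = a) (hsN : s N = b) :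
    ∑ j ∈ Finset.range N, |f (s (j + 1)) - f (s j)| ^ p ∈ pVarSet p a b f := by
  refine ⟨N, fun j => s j, ⟨fun j₁ j₂ h => hs _ _ h (Nat.lt_succ_iff.mp j₂.isLt), hs0, hsN⟩, ?_⟩
  rw [← Fin.sum_univ_eq_sum_range]
  simp

theorem rpow_sum_range_le_pVarNorm (hp : 0 ≤ p) (hf : BddAbove (pVarSet p a b f))
    {s : ℕ → ℝ} {N : ℕ} (hs : ∀ i j, i ≤ j → j ≤ N → s i ≤ s j) (hs0 : s 0 = a)
    (hsN : s N = b) :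
    (∑ j ∈ Finset.range N, |f (s (j + 1)) - f (s j)| ^ p) ^ (1 / p) ≤ pVarNorm p a b f :=
  Real.rpow_le_rpow (Finset.sum_nonneg fun _ _ => Real.rpow_nonneg (abs_nonneg _) _)
    (le_csSup hf (sum_range_mem_pVarSet hs hs0 hsN)) (by positivity)

end PVariation

theorem pVarNorm_le_biVar1 {p a b c d y₁ y₂ : ℝ} {F : ℝ → ℝ → ℝ}
    (hF : FiniteBiVar1 p a b c d F) (hy₁ : y₁ ∈ Icc c d) (hy₂ : y₂ ∈ Icc c d) :
    pVarNorm p a b (fun x => F x y₁ - F x y₂) ≤ biVar1 p a b c d F :=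
  le_csSup hF.2 ⟨y₁, hy₁, y₂, hy₂, rfl⟩

theorem rect_eq_sub (H : ℝ → ℝ → ℝ) (x x' y y' : ℝ) :
    rect H x x' y y' = (H x' y' - H x' y) - (H x y' - H x y) := by
  rw [rect]
  ring

def stieltjesSum (φ g : ℝ → ℝ) (s : ℕ → ℝ) (n : ℕ) : ℝ :=
  ∑ i ∈ Finset.range n, φ (s (i + 1)) * (g (s (i + 1)) - g (s i))

section StieltjesSum

variable {φ g : ℝ → ℝ}

theorem stieltjesSum_congr {s s' : ℕ → ℝ} {n : ℕ} (h : ∀ i ≤ n, s i = s' i) :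
    stieltjesSum φ g s n = stieltjesSum φ g s' n :=
  Finset.sum_congr rfl fun i hi => by
    have hi := Finset.mem_range.mp hi
    rw [h i hi.le, h (i + 1) hi]

theorem stieltjesSum_two_mul_sub (s : ℕ → ℝ) (n : ℕ) :
    stieltjesSum φ g s (2 * n) - stieltjesSum φ g (fun i => s (2 * i)) n =
      ∑ i ∈ Finset.range n,
        (φ (s (2 * i + 1)) - φ (s (2 * i + 2))) * (g (s (2 * i + 1)) - g (s (2 * i))) := by
  rw [stieltjesSum, stieltjesSum, Finset.sum_range_two_mul, ← Finset.sum_sub_distrib]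
  refine Finset.sum_congr rfl fun i _ => ?_
  rw [show 2 * (i + 1) = 2 * i + 1 + 1 by ring]
  ring

theorem abs_stieltjesSum_two_mul_sub_le {p a b L : ℝ} {s : ℕ → ℝ} {n : ℕ}
    (hp : 1 ≤ p) (hφ : BddAbove (pVarSet p a b φ))
    (hs : ∀ i j, i ≤ j → j ≤ 2 * n → s i ≤ s j) (hs0 : s 0 = a) (hsn : s (2 * n) = b)
    (hL : 0 ≤ L) (hg : ∀ i < n, |g (s (2 * i + 1)) - g (s (2 * i))| ≤ L) :
    |stieltjesSum φ g s (2 * n) - stieltjesSum φ g (fun i => s (2 * i)) n| ≤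
      (n : ℝ) ^ (1 - p⁻¹) * pVarNorm p a b φ * L := by
  set δ : ℕ → ℝ := fun i => |φ (s (2 * i + 1 + 1)) - φ (s (2 * i + 1))|
  have hholder : ∑ i ∈ Finset.range n, δ i ≤
      (n : ℝ) ^ (1 - p⁻¹) * (∑ i ∈ Finset.range n, δ i ^ p) ^ p⁻¹ := by
    simpa using Real.inner_le_weight_mul_Lp_of_nonneg (Finset.range n) hp (fun _ => 1) δ
      (fun _ => zero_le_one) (fun _ => abs_nonneg _)
  have hvar : (∑ i ∈ Finset.range n, δ i ^ p) ^ p⁻¹ ≤ pVarNorm p a b φ := by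
    refine le_trans ?_ (rpow_sum_range_le_pVarNorm (by linarith) hφ hs hs0 hsn)
    rw [one_div, Finset.sum_range_two_mul]
    gcongr with i
    exact le_add_of_nonneg_left (by positivity)
  calc |stieltjesSum φ g s (2 * n) - stieltjesSum φ g (fun i => s (2 * i)) n|
      ≤ ∑ i ∈ Finset.range n, δ i * L := by
        rw [stieltjesSum_two_mul_sub]
        refine (Finset.abs_sum_le_sum_abs _ _).trans (Finset.sum_le_sum fun i hi => ?_)
        rw [abs_mul, abs_sub_comm]
        exact mul_le_mul_of_nonneg_left (hg i (Finset.mem_range.mp hi)) (abs_nonneg _)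
    _ = (∑ i ∈ Finset.range n, δ i) * L := (Finset.sum_mul ..).symm
    _ ≤ (n : ℝ) ^ (1 - p⁻¹) * pVarNorm p a b φ * L := by
        gcongr
        exact hholder.trans (by gcongr)

theorem sum_mul_rect_eq_stieltjesSum {a b c d : ℝ} {F G : ℝ → ℝ → ℝ} {s : ℕ → ℝ} {n : ℕ}
    (hFc : ∀ x ∈ Icc a b, F x c = 0) (hs : ∀ i < n, s (i + 1) ∈ Icc a b) :
    ∑ i ∈ Finset.range n, F (s (i + 1)) d * rect G (s i) (s (i + 1)) c d =
      stieltjesSum (fun x => F x d - F x c) (fun x => G x d - G x c) s n :=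
  Finset.sum_congr rfl fun i hi => by
    simp only [rect_eq_sub, hFc _ (hs i (Finset.mem_range.mp hi)), sub_zero]

end StieltjesSum

theorem rpow_one_sub_inv_le_two_mul_div {x p : ℝ} (hx : 0 < x) (hp : 1 ≤ p) :
    x ^ (1 - p⁻¹) ≤ 2 * x / (2 * x) ^ (1 / p) := by
  have h2 : (2 : ℝ) ^ p⁻¹ ≤ 2 := by
    simpa using Real.rpow_le_rpow_of_exponent_le one_le_two (inv_le_one_of_one_le₀ hp)
  have hxp : 0 < x ^ p⁻¹ := Real.rpow_pos_of_pos hx _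
  rw [Real.mul_rpow zero_le_two hx.le, Real.rpow_sub hx, Real.rpow_one, one_div,
    div_le_div_iff₀ hxp (by positivity)]
  nlinarith [mul_pos hx hxp]

theorem sum_range_two_pow_mul_le_tsum {f : ℕ → ℝ} (hf : ∀ ⦃m n⦄, 0 < m → m ≤ n → f n ≤ f m)
    (hf0 : ∀ n, 0 < n → 0 ≤ f n) (hsum : Summable fun n => f (n + 1)) (N : ℕ) :
    ∑ k ∈ Finset.range N, 2 ^ k * f (2 ^ (k + 1)) ≤ ∑' n, f (n + 1) := by
  calc ∑ k ∈ Finset.range N, 2 ^ k * f (2 ^ (k + 1))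
      ≤ ∑ k ∈ Finset.Ico 2 (2 ^ N + 1), f k := by
        simpa only [nsmul_eq_mul, Nat.cast_pow, Nat.cast_ofNat] using
          Finset.sum_condensed_le' (fun m n hm => hf (by omega)) N
    _ ≤ ∑ k ∈ Finset.Ico 1 (2 ^ N + 1), f k :=
        Finset.sum_le_sum_of_subset_of_nonneg (Finset.Ico_subset_Ico_left one_le_two)
          fun k hk _ => hf0 k (Finset.mem_Ico.mp hk).1
    _ = ∑ n ∈ Finset.range (2 ^ N), f (n + 1) := by
        rw [Finset.sum_Ico_eq_sum_range]
        simp [add_comm]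
    _ ≤ ∑' n, f (n + 1) := hsum.sum_le_tsum _ fun n _ => hf0 (n + 1) n.succ_pos

theorem abs_stieltjesSum_two_mul_sub_le_of_mesh {p a b V h : ℝ} {φ g ω : ℝ → ℝ}
    {s : ℕ → ℝ} {n : ℕ} (hp : 1 ≤ p) (hφ : BddAbove (pVarSet p a b φ))
    (hV : pVarNorm p a b φ ≤ V) (hω : MonotoneOn ω (Ici 0))
    (hg : ∀ x y, a ≤ x → x ≤ y → y ≤ b → |g y - g x| ≤ ω (y - x))
    (hs : ∀ i j, i ≤ j → j ≤ 2 * n → s i ≤ s j) (hs0 : s 0 = a) (hsn : s (2 * n) = b)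
    (hn : 0 < n) (hmesh : ∀ i < 2 * n, s (i + 1) - s i ≤ h) :
    |stieltjesSum φ g s (2 * n) - stieltjesSum φ g (fun i => s (2 * i)) n| ≤
      2 * (n * (V / (2 * n : ℝ) ^ (1 / p) * ω h)) := by
  have hstep : ∀ i < n, |g (s (2 * i + 1)) - g (s (2 * i))| ≤ ω h := by
    intro i hi
    have hle : s (2 * i) ≤ s (2 * i + 1) := hs _ _ (by omega) (by omega)
    refine (hg _ _ ?_ hle ?_).trans (hω (mem_Ici.mpr (by simpa using hle))
      (mem_Ici.mpr ((sub_nonneg.mpr hle).trans (hmesh _ (by omega)))) (hmesh _ (by omega)))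
    · exact hs0 ▸ hs _ _ (Nat.zero_le _) (by omega)
    · exact hsn ▸ hs _ _ (by omega) le_rfl
  have hω0h : 0 ≤ ω h := (abs_nonneg _).trans (hstep 0 hn)
  have hx := rpow_one_sub_inv_le_two_mul_div (x := (n : ℝ)) (by exact_mod_cast hn) hp
  calc _ ≤ (n : ℝ) ^ (1 - p⁻¹) * V * ω h :=
        (abs_stieltjesSum_two_mul_sub_le hp hφ hs hs0 hsn hω0h hstep).trans (by gcongr)
    _ ≤ 2 * n / (2 * n : ℝ) ^ (1 / p) * V * ω h := by
        have : 0 ≤ V := pVarNorm_nonneg.trans hV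
        gcongr
    _ = 2 * (n * (V / (2 * n : ℝ) ^ (1 / p) * ω h)) := by ring

theorem abs_stieltjesSum_dyadic_sub_le {p a b V : ℝ} {φ g ω : ℝ → ℝ} {M : ℕ}
    {t : ℕ → ℕ → ℝ} (hp : 1 ≤ p) (hφ : BddAbove (pVarSet p a b φ))
    (hV : pVarNorm p a b φ ≤ V) (hω : MonotoneOn ω (Ici 0)) (hω0 : ∀ u ≥ (0 : ℝ), 0 ≤ ω u)
    (hg : ∀ x y, a ≤ x → x ≤ y → y ≤ b → |g y - g x| ≤ ω (y - x))
    (hpart : ∀ k ≤ M, (∀ i j : ℕ, i ≤ j → j ≤ 2 ^ k → t k i ≤ t k j) ∧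
      t k 0 = a ∧ t k (2 ^ k) = b)
    (hmesh : ∀ k ≤ M, ∀ i < 2 ^ k, t k (i + 1) - t k i < 4 / 2 ^ k)
    (hnest : ∀ k, 1 ≤ k → k ≤ M → ∀ i ≤ 2 ^ (k - 1), t k (2 * i) = t (k - 1) i)
    (hsum : Summable fun m : ℕ => V / ((m : ℝ) + 1) ^ (1 / p) * ω (4 / ((m : ℝ) + 1))) :
    |stieltjesSum φ g (t M) (2 ^ M) - stieltjesSum φ g (t 0) 1| ≤
      2 * ∑' m : ℕ, V / ((m : ℝ) + 1) ^ (1 / p) * ω (4 / ((m : ℝ) + 1)) := by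
  set f : ℕ → ℝ := fun n => V / (n : ℝ) ^ (1 / p) * ω (4 / n)
  have hV0 : 0 ≤ V := pVarNorm_nonneg.trans hV
  have hf : ∀ ⦃m n⦄, 0 < m → m ≤ n → f n ≤ f m := by
    intro m n hm hmn
    have hm' : (0 : ℝ) < m := by exact_mod_cast hm
    have hmn' : (m : ℝ) ≤ n := by exact_mod_cast hmn
    refine mul_le_mul ?_ (hω (mem_Ici.mpr (by positivity)) (mem_Ici.mpr (by positivity)) ?_)
      (hω0 _ (by positivity)) (by positivity)
    · gcongr
    · gcongr
  have hlevel : ∀ k < M, |stieltjesSum φ g (t (k + 1)) (2 ^ (k + 1)) -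
      stieltjesSum φ g (t k) (2 ^ k)| ≤ 2 * (2 ^ k * f (2 ^ (k + 1))) := by
    intro k hk
    obtain ⟨hmono, ht0, htb⟩ := hpart (k + 1) hk
    have hcoarse : stieltjesSum φ g (t k) (2 ^ k) =
        stieltjesSum φ g (fun i => t (k + 1) (2 * i)) (2 ^ k) :=
      stieltjesSum_congr fun i hi => (hnest (k + 1) (by omega) hk i hi).symm
    have hfine := fun i hi => (hmesh (k + 1) hk i hi).le
    rw [pow_succ'] at hmono htb hfine
    conv_lhs => rw [pow_succ', hcoarse]
    simpa [f, pow_succ'] using abs_stieltjesSum_two_mul_sub_le_of_mesh hp hφ hV hω hg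
      hmono ht0 htb (by positivity) hfine
  have hcond := sum_range_two_pow_mul_le_tsum hf
    (fun n _ => mul_nonneg (by positivity) (hω0 _ (by positivity))) (by simpa [f] using hsum) M
  have htel := Finset.sum_range_sub (fun k => stieltjesSum φ g (t k) (2 ^ k)) M
  rw [pow_zero] at htel
  rw [← htel]
  calc _ ≤ ∑ k ∈ Finset.range M, |stieltjesSum φ g (t (k + 1)) (2 ^ (k + 1)) -
          stieltjesSum φ g (t k) (2 ^ k)| := Finset.abs_sum_le_sum_abs _ _
    _ ≤ ∑ k ∈ Finset.range M, 2 * (2 ^ k * f (2 ^ (k + 1))) :=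
        Finset.sum_le_sum fun k hk => hlevel k (Finset.mem_range.mp hk)
    _ = 2 * ∑ k ∈ Finset.range M, 2 ^ k * f (2 ^ (k + 1)) := (Finset.mul_sum ..).symm
    _ ≤ _ := by
        gcongr
        simpa [f] using hcond

/-- marginal estimate.  For an absolute constant `K₁`, under the
hypotheses of Young's theorem (in particular `F(·,c) = 0`), the difference
`S_{M,0} - S_{0,0}` of marginal Riemann–Stieltjes sums along a nested
dyadically-refining partition sequence of `[a,b]` is bounded by
`K₁ μ(d-c) Σ_m (‖F‖_{1;p}/m^{1/p}) λ(4/m)`. -/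
theorem young_marginal_estimate :
    ∃ K₁ : ℝ, ∀ (a b c d p : ℝ), a < b → c < d → 1 ≤ p →
    ∀ (F G : ℝ → ℝ → ℝ) (lam mu : ℝ → ℝ),
    MonotoneOn lam (Set.Ici 0) → MonotoneOn mu (Set.Ici 0) →
    (∀ u ≥ (0 : ℝ), 0 ≤ lam u) → (∀ u ≥ (0 : ℝ), 0 ≤ mu u) →
    FiniteBiVar1 p a b c d F →
    (∀ x ∈ Icc a b, F x c = 0) →
    (∀ x₁ x₂ y₁ y₂ : ℝ, a ≤ x₁ → x₁ ≤ x₂ → x₂ ≤ b → c ≤ y₁ → y₁ ≤ y₂ → y₂ ≤ d →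
      |rect G x₁ x₂ y₁ y₂| ≤ lam (x₂ - x₁) * mu (y₂ - y₁)) →
    ∀ (M : ℕ) (t : ℕ → ℕ → ℝ),
    (∀ k ≤ M, (∀ i j : ℕ, i ≤ j → j ≤ 2 ^ k → t k i ≤ t k j) ∧
      t k 0 = a ∧ t k (2 ^ k) = b) →
    (∀ k ≤ M, ∀ i < 2 ^ k, t k (i + 1) - t k i < 4 / 2 ^ k) →
    (∀ k, 1 ≤ k → k ≤ M → ∀ i ≤ 2 ^ (k - 1), t k (2 * i) = t (k - 1) i) →
    Summable (fun m : ℕ =>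
      biVar1 p a b c d F / ((m : ℝ) + 1) ^ (1 / p) * lam (4 / ((m : ℝ) + 1))) →
    |(∑ i ∈ Finset.range (2 ^ M),
        F (t M (i + 1)) d * rect G (t M i) (t M (i + 1)) c d)
      - F b d * rect G a b c d| ≤
      K₁ * mu (d - c) *
        ∑' m : ℕ,
          biVar1 p a b c d F / ((m : ℝ) + 1) ^ (1 / p) * lam (4 / ((m : ℝ) + 1)) := by
  refine ⟨2, fun a b c d p hab hcd hp F G lam mu hlam _ hlam0 hmu0 hF hFc hG M t hpart hmesh
    hnest hsum => ?_⟩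
  have hc : c ∈ Icc c d := left_mem_Icc.mpr hcd.le
  have hd : d ∈ Icc c d := right_mem_Icc.mpr hcd.le
  have hmu : 0 ≤ mu (d - c) := hmu0 _ (by linarith)
  obtain ⟨hmono, ht0, htb⟩ := hpart M le_rfl
  obtain ⟨-, h0, h1⟩ := hpart 0 (Nat.zero_le M)
  rw [pow_zero] at h1
  have hS0 : F b d * rect G a b c d =
      ∑ i ∈ Finset.range 1, F (t 0 (i + 1)) d * rect G (t 0 i) (t 0 (i + 1)) c d := by
    simp [h0, h1]
  have hg : ∀ x y, a ≤ x → x ≤ y → y ≤ b →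
      |(G y d - G y c) - (G x d - G x c)| ≤ lam (y - x) * mu (d - c) := by
    intro x y hax hxy hyb
    simpa only [rect_eq_sub, sub_self] using hG x y c d hax hxy hyb le_rfl hcd.le le_rfl
  rw [hS0, sum_mul_rect_eq_stieltjesSum hFc fun i hi =>
      ⟨ht0 ▸ hmono _ _ (Nat.zero_le _) hi, htb ▸ hmono _ _ hi le_rfl⟩,
    sum_mul_rect_eq_stieltjesSum hFc fun i hi => by
      rw [Nat.lt_one_iff.mp hi, zero_add, h1]; exact right_mem_Icc.mpr hab.le]
  refine (abs_stieltjesSum_dyadic_sub_le (ω := fun u => lam u * mu (d - c)) hp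
    (hF.1 d hd c hc) (pVarNorm_le_biVar1 hF hd hc)
    (fun x hx y hy hxy => mul_le_mul_of_nonneg_right (hlam hx hy hxy) hmu)
    (fun u hu => mul_nonneg (hlam0 u hu) hmu) hg hpart hmesh hnest
    (by simpa only [mul_assoc] using hsum.mul_right (mu (d - c)))).trans (le_of_eq ?_)
  simp_rw [← mul_assoc, tsum_mul_right]
  ring
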